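/- arXiv:2505.03015 — 6 statements merged into one kernel-verified Lean document; each statement's English description precedes it below -/
import Mathlib

section
/- If a ring R satisfies the ascending chain condition on right annihilator ideals, then the right singular ideal Z_r(R) of R is nilpotent. -/
/-- A submodule is essential if it intersects every nonzero submodule nontrivially. -/
def Submodule.Essential {R M : Type*} [Ring R] [AddCommGroup M] [Module R M]
    (N : Submodule R M) : Prop :=
  ∀ K : Submodule R M, K ≠ ⊥ → N ⊓ K ≠ ⊥

/-- `N` is essential in `D`. -/
def Submodule.EssentialIn {R M : Type*} [Ring R] [AddCommGroup M] [Module R M]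
    (N D : Submodule R M) : Prop :=
  N ≤ D ∧ ∀ K : Submodule R M, K ≤ D → K ≠ ⊥ → N ⊓ K ≠ ⊥

/-- A submodule is fully invariant if every endomorphism maps it into itself. -/
def Submodule.FullyInvariant {R M : Type*} [Ring R] [AddCommGroup M] [Module R M]
    (N : Submodule R M) : Prop :=
  ∀ f : M →ₗ[R] M, N.map f ≤ N

/-- A module is FI-extending if every fully invariant submodule is essential
in a direct summand. -/
def IsFIExtending (R M : Type*) [Ring R] [AddCommGroup M] [Module R M] : Prop :=
  ∀ N : Submodule R M, N.FullyInvariant →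
    ∃ D D' : Submodule R M, IsCompl D D' ∧ N.EssentialIn D

/-- The right annihilator of a subset of a ring, as a right ideal
(submodule of `R` over `Rᵐᵒᵖ`). -/
def rightAnn (R : Type*) [Ring R] (S : Set R) : Submodule Rᵐᵒᵖ R where
  carrier := {x | ∀ s ∈ S, s * x = 0}
  add_mem' := by
    intro a b ha hb s hs
    rw [mul_add, ha s hs, hb s hs, add_zero]
  zero_mem' := by intro s hs; rw [mul_zero]
  smul_mem' := by
    intro c x hx s hs
    show s * (c • x) = 0
    rw [MulOpposite.smul_eq_mul_unop, ← mul_assoc, hx s hs, zero_mul]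

/-- The right singular ideal of a ring: elements whose right annihilator is an
essential right ideal. -/
def rightSingular (R : Type*) [Ring R] : Set R :=
  {r | (rightAnn R {r}).Essential}

/-- ACC on right annihilators: every ascending chain of right annihilator ideals
stabilizes. -/
def ACCRightAnnihilators (R : Type*) [Ring R] : Prop :=
  ∀ c : ℕ → Set R, (Monotone fun i => rightAnn R (c i)) →
    ∃ N, ∀ i, N ≤ i → rightAnn R (c i) = rightAnn R (c N)

/-- The endomorphism of `M₁ × M₂` given by a 2×2 matrix of homomorphisms. -/
def blockMap {R M1 M2 : Type*} [Ring R] [AddCommGroup M1] [AddCommGroup M2]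
    [Module R M1] [Module R M2] (e : M1 →ₗ[R] M1) (m : M2 →ₗ[R] M1)
    (n : M1 →ₗ[R] M2) (f : M2 →ₗ[R] M2) : (M1 × M2) →ₗ[R] (M1 × M2) :=
  ((e ∘ₗ LinearMap.fst R M1 M2) + (m ∘ₗ LinearMap.snd R M1 M2)).prod
    ((n ∘ₗ LinearMap.fst R M1 M2) + (f ∘ₗ LinearMap.snd R M1 M2))

section Aux

variable {R : Type*} [Ring R]

lemma mem_rightAnn_singleton {s x : R} : x ∈ rightAnn R {s} ↔ s * x = 0 := by
  constructor
  · intro h; exact h s rfl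
  · rintro h t rfl; exact h

lemma Submodule.Essential.comap' {R M N' : Type*} [Ring R] [AddCommGroup M]
    [AddCommGroup N'] [Module R M] [Module R N'] (f : M →ₗ[R] N')
    {E : Submodule R N'} (hE : E.Essential) : (E.comap f).Essential := by
  intro K hK
  rw [Submodule.ne_bot_iff]
  by_cases hmap : K.map f = ⊥
  · obtain ⟨x, hxK, hx0⟩ := Submodule.ne_bot_iff _ |>.mp hK
    have hfx : f x = 0 := by
      have : f x ∈ K.map f := Submodule.mem_map_of_mem hxK
      rw [hmap] at this; simpa using this
    exact ⟨x, ⟨by simp [Submodule.mem_comap, hfx], hxK⟩, hx0⟩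
  · obtain ⟨y, hy, hy0⟩ := Submodule.ne_bot_iff _ |>.mp (hE _ hmap)
    obtain ⟨x, hxK, hfx⟩ := hy.2
    refine ⟨x, ⟨?_, hxK⟩, ?_⟩
    · simp [Submodule.mem_comap, hfx, hy.1]
    · rintro rfl; rw [map_zero] at hfx; exact hy0 hfx.symm

/-- Left multiplication as a right-module endomorphism. -/
def lmulLeft (a : R) : R →ₗ[Rᵐᵒᵖ] R where
  toFun x := a * x
  map_add' := mul_add a
  map_smul' c x := by
    simp only [MulOpposite.smul_eq_mul_unop, RingHom.id_apply, mul_assoc]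

lemma rightAnn_mul (z a : R) :
    rightAnn R {z * a} = (rightAnn R {z}).comap (lmulLeft a) := by
  ext x
  rw [mem_rightAnn_singleton, Submodule.mem_comap]
  show z * a * x = 0 ↔ a * x ∈ rightAnn R {z}
  rw [mem_rightAnn_singleton, mul_assoc]

lemma mul_mem_rightSingular {z : R} (hz : z ∈ rightSingular R) (a : R) :
    z * a ∈ rightSingular R := by
  show (rightAnn R {z * a}).Essential
  rw [rightAnn_mul]
  exact Submodule.Essential.comap' _ hz

lemma rightAnn_lt {z a : R} (hz : z ∈ rightSingular R) (ha : a ≠ 0) :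
    rightAnn R {a} < rightAnn R {z * a} := by
  have hle : rightAnn R {a} ≤ rightAnn R {z * a} := by
    intro x hx
    rw [mem_rightAnn_singleton] at hx ⊢
    rw [mul_assoc, hx, mul_zero]
  rw [lt_iff_le_not_ge]
  refine ⟨hle, fun hcontra => ?_⟩
  have hspan : (Submodule.span Rᵐᵒᵖ {a} : Submodule Rᵐᵒᵖ R) ≠ ⊥ := by
    rw [Submodule.ne_bot_iff]
    exact ⟨a, Submodule.mem_span_singleton_self a, ha⟩
  obtain ⟨t, ⟨ht1, ht2⟩, ht0⟩ := Submodule.ne_bot_iff _ |>.mp (hz _ hspan)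
  obtain ⟨c, rfl⟩ := Submodule.mem_span_singleton.mp ht2
  -- c • a = a * c.unop
  have h1 : z * (a * c.unop) = 0 := mem_rightAnn_singleton.mp ht1
  have h2 : (z * a) * c.unop = 0 := by rw [mul_assoc]; exact h1
  have h3 : c.unop ∈ rightAnn R {z * a} := mem_rightAnn_singleton.mpr h2
  have h4 : a * c.unop = 0 := mem_rightAnn_singleton.mp (hcontra h3)
  exact ht0 (by simpa [MulOpposite.smul_eq_mul_unop] using h4)

lemma exists_rightAnn_max (hacc : ACCRightAnnihilators R)
    (S : Set R) (hS : S.Nonempty) :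
    ∃ a ∈ S, ∀ b ∈ S, ¬ rightAnn R {a} < rightAnn R {b} := by
  by_contra h
  push_neg at h
  obtain ⟨a0, ha0⟩ := hS
  choose g hg1 hg2 using h
  let f : ℕ → {x // x ∈ S} := fun n =>
    Nat.rec ⟨a0, ha0⟩ (fun _ p => ⟨g p.1 p.2, hg1 p.1 p.2⟩) n
  have hstep : ∀ n, rightAnn R {(f n).1} < rightAnn R {(f (n+1)).1} :=
    fun n => hg2 _ _
  have hmono : Monotone fun i => rightAnn R ({(f i).1} : Set R) :=
    monotone_nat_of_le_succ fun n => (hstep n).le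
  obtain ⟨N, hN⟩ := hacc (fun i => {(f i).1}) hmono
  exact absurd (hN (N+1) (Nat.le_succ N)) (hstep N).ne'

end Aux
/-- If a ring has ACC on right annihilators, its right singular ideal is nilpotent. -/
theorem rightSingular_nilpotent (R : Type*) [Ring R]
    (hacc : ACCRightAnnihilators R) :
    ∃ n : ℕ, 0 < n ∧ ∀ l : List R, (∀ x ∈ l, x ∈ rightSingular R) →
      l.length = n → l.prod = 0 := by
  classical
  -- the chain of annihilators of products of (i+1) singular elements
  set c : ℕ → Set R := fun i =>
    {p | ∃ l : List R, (∀ x ∈ l, x ∈ rightSingular R) ∧ l.length = i + 1 ∧ l.prod = p}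
    with hc
  have hmono : Monotone fun i => rightAnn R (c i) := by
    apply monotone_nat_of_le_succ
    intro i x hx
    rintro p ⟨l, hl, hlen, rfl⟩
    match l, hlen with
    | z :: l', hlen =>
      have hl' : l'.prod ∈ c i := ⟨l', fun y hy => hl y (List.mem_cons_of_mem _ hy),
        by simpa using hlen, rfl⟩
      have : l'.prod * x = 0 := hx _ hl'
      rw [List.prod_cons, mul_assoc, this, mul_zero]
  obtain ⟨N, hN⟩ := hacc c hmono
  refine ⟨N + 1, Nat.succ_pos _, ?_⟩
  intro l hl hlen
  by_contra hne
  -- the set of elements not annihilated by some product of N+1 singular elements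
  set S : Set R := {a | ∃ l' : List R, (∀ x ∈ l', x ∈ rightSingular R) ∧
    l'.length = N + 1 ∧ l'.prod * a ≠ 0} with hS
  have hone : (1 : R) ∈ S := ⟨l, hl, hlen, by simpa using hne⟩
  obtain ⟨a, ⟨la, hla, hlalen, hlaprod⟩, hmax⟩ :=
    exists_rightAnn_max hacc S ⟨1, hone⟩
  have ha0 : a ≠ 0 := by rintro rfl; exact hlaprod (mul_zero _)
  have hanotmem : a ∉ rightAnn R (c N) := by
    intro h
    exact hlaprod (h la.prod ⟨la, hla, hlalen, rfl⟩)
  have hanotmem' : a ∉ rightAnn R (c (N + 1)) := by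
    rw [hN (N + 1) (Nat.le_succ N)]; exact hanotmem
  have : ∃ p ∈ c (N + 1), p * a ≠ 0 := by
    by_contra h
    push_neg at h
    exact hanotmem' (fun p hp => h p hp)
  obtain ⟨p, ⟨l₂, hl₂, hl₂len, rfl⟩, hpa⟩ := this
  have hl₂ne : l₂ ≠ [] := by
    intro h; rw [h] at hl₂len; simp at hl₂len
  set z := l₂.getLast hl₂ne with hz
  set l'' := l₂.dropLast with hl''
  have hsplit : l₂ = l'' ++ [z] := (List.dropLast_append_getLast hl₂ne).symm
  have hzZ : z ∈ rightSingular R := hl₂ _ (List.getLast_mem hl₂ne)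
  have hl''Z : ∀ x ∈ l'', x ∈ rightSingular R :=
    fun x hx => hl₂ x ((List.dropLast_sublist l₂).subset hx)
  have hl''len : l''.length = N + 1 := by
    rw [hl'', List.length_dropLast, hl₂len]
    omega
  have hprod : l₂.prod = l''.prod * z := by
    rw [hsplit, List.prod_append, List.prod_singleton]
  have hza : l''.prod * (z * a) ≠ 0 := by
    rw [← mul_assoc, ← hprod]; exact hpa
  have hzaS : z * a ∈ S := ⟨l'', hl''Z, hl''len, hza⟩
  exact hmax (z * a) hzaS (rightAnn_lt hzZ ha0)
end

section
/- Let M be a right R-module and N a fully invariant submodule of M. If there exists an idempotent endomorphism E of M such that N is essential in E(M), then for any endomorphism s of M there exists an essential submodule K of M such that (1 - E) ∘ s ∘ E vanishes on K. -/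
/-- If a fully invariant submodule `N` is essential in `E(M)` for an idempotent
`E`, then for every endomorphism `s` the map `(1-E) ∘ s ∘ E` vanishes on some
essential submodule. -/
theorem exists_essential_annihilated (R M : Type*) [Ring R] [AddCommGroup M]
    [Module Rᵐᵒᵖ M] (N : Submodule Rᵐᵒᵖ M) (hN : N.FullyInvariant)
    (E : M →ₗ[Rᵐᵒᵖ] M) (hE : E ∘ₗ E = E)
    (hess : N.EssentialIn (LinearMap.range E)) (s : M →ₗ[Rᵐᵒᵖ] M) :
    ∃ K : Submodule Rᵐᵒᵖ M, K.Essential ∧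
      ∀ x ∈ K, ((LinearMap.id - E) ∘ₗ s ∘ₗ E) x = 0 := by
    classical
  have hEid : ∀ x ∈ LinearMap.range E, E x = x := by
    rintro x ⟨y, rfl⟩
    rw [← LinearMap.comp_apply, hE]
  refine ⟨N ⊔ LinearMap.ker E, ?_, ?_⟩
  · intro L hL hcontra
    have hzero : ∀ x, x ∈ N ⊔ LinearMap.ker E → x ∈ L → x = 0 := by
      intro x hx hxL
      have : x ∈ (N ⊔ LinearMap.ker E) ⊓ L := ⟨hx, hxL⟩
      rw [hcontra] at this
      simpa using this
    obtain ⟨x, hxL, hx0⟩ := Submodule.ne_bot_iff L |>.mp hL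
    have hEx0 : E x ≠ 0 := by
      intro h
      exact hx0 (hzero x (Submodule.mem_sup_right h) hxL)
    have hL' : ((LinearMap.ker E ⊔ L) ⊓ LinearMap.range E) ≠ ⊥ := by
      rw [Submodule.ne_bot_iff]
      refine ⟨E x, ⟨?_, ⟨x, rfl⟩⟩, hEx0⟩
      have hk : x - E x ∈ LinearMap.ker E := by
        simp only [LinearMap.mem_ker, map_sub]
        rw [← LinearMap.comp_apply, hE, sub_self]
      rw [(sub_sub_cancel x (E x)).symm]
      exact Submodule.sub_mem _ (Submodule.mem_sup_right hxL) (Submodule.mem_sup_left hk)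
    have hNL' := hess.2 _ inf_le_right hL'
    obtain ⟨n, ⟨hnN, hnmem, hnrange⟩, hn0⟩ := Submodule.ne_bot_iff _ |>.mp hNL'
    obtain ⟨k, hk, l, hl, hkl⟩ := Submodule.mem_sup.mp hnmem
    have hlval : l = 0 := by
      refine hzero l ?_ hl
      rw [show l = n - k by rw [← hkl]; exact (add_sub_cancel_left k l).symm]
      exact Submodule.sub_mem _ (Submodule.mem_sup_left hnN) (Submodule.mem_sup_right hk)
    have : n = k := by rw [← hkl, hlval, add_zero]
    apply hn0
    rw [← hEid n hnrange, this]
    exact hk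
  · intro x hx
    obtain ⟨a, ha, b, hb, rfl⟩ := Submodule.mem_sup.mp hx
    have hEa : E a = a := hEid a (hess.1 ha)
    have hsa : s a ∈ N := hN s ⟨a, ha, rfl⟩
    have hEsa : E (s a) = s a := hEid _ (hess.1 hsa)
    have hEab : E (a + b) = a := by
      rw [map_add, hEa, LinearMap.mem_ker.mp hb, add_zero]
    rw [LinearMap.comp_apply, LinearMap.comp_apply, hEab, LinearMap.sub_apply,
      LinearMap.id_apply, hEsa, sub_self]
end

section
/- A finite direct sum of FI-extending right R-modules is FI-extending. In particular, if R_R is FI-extending then the free module R^t is FI-extending for every positive integer t. -/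
theorem pi_fiExtending {A : Type*} [Ring A] {ι : Type*} [Fintype ι] (M : ι → Type*)
    [∀ i, AddCommGroup (M i)] [∀ i, Module A (M i)]
    (h : ∀ i, IsFIExtending A (M i)) : IsFIExtending A (∀ i, M i) := by
  classical
  intro N hN
  set Ni : ∀ i, Submodule A (M i) := fun i => N.map (LinearMap.proj i) with hNidef
  -- each Ni is fully invariant
  have hNi_fi : ∀ i, (Ni i).FullyInvariant := by
    intro i f y hy
    obtain ⟨x, hx, rfl⟩ := hy
    obtain ⟨n, hn, rfl⟩ := hx
    have key : (LinearMap.single A M i ∘ₗ (f ∘ₗ LinearMap.proj i)) n ∈ N :=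
      hN _ ⟨n, hn, rfl⟩
    refine ⟨_, key, ?_⟩
    simp [LinearMap.single_apply]
  choose D D' hcompl hess using fun i => h i (Ni i) (hNi_fi i)
  -- pi Ni ≤ N
  have hpiN : Submodule.pi Set.univ Ni ≤ N := by
    intro y hy
    have : y = ∑ i, Pi.single i (y i) := (Finset.univ_sum_single y).symm
    rw [this]
    refine Submodule.sum_mem _ fun i _ => ?_
    obtain ⟨n, hn, hni⟩ := hy i trivial
    have key : (LinearMap.single A M i ∘ₗ LinearMap.proj i) n ∈ N :=
      hN _ ⟨n, hn, rfl⟩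
    have hni' : n i = y i := hni
    simpa [LinearMap.single_apply, hni'] using key
  have hNpi : N ≤ Submodule.pi Set.univ Ni := fun x hx i _ => ⟨x, hx, rfl⟩
  -- pointwise essentiality criterion
  have hess' : ∀ i, ∀ y ∈ D i, y ≠ 0 → ∃ r : A, r • y ∈ Ni i ∧ r • y ≠ 0 := by
    intro i y hy hy0
    have hle : Submodule.span A ({y} : Set (M i)) ≤ D i := by
      rw [Submodule.span_le, Set.singleton_subset_iff]; exact hy
    have hne : Submodule.span A ({y} : Set (M i)) ≠ ⊥ := by
      simp [Submodule.span_singleton_eq_bot, hy0]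
    have := (hess i).2 _ hle hne
    obtain ⟨z, hz, hz0⟩ := Submodule.exists_mem_ne_zero_of_ne_bot this
    obtain ⟨r, rfl⟩ := Submodule.mem_span_singleton.mp hz.2
    exact ⟨r, hz.1, hz0⟩
  refine ⟨Submodule.pi Set.univ D, Submodule.pi Set.univ D', ⟨?_, ?_⟩, ?_, ?_⟩
  · -- disjoint
    rw [disjoint_iff]
    refine (Submodule.eq_bot_iff _).mpr fun x hx => ?_
    funext i
    have : x i ∈ D i ⊓ D' i := ⟨hx.1 i trivial, hx.2 i trivial⟩
    rw [disjoint_iff.mp (hcompl i).disjoint] at this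
    simpa using this
  · -- codisjoint
    rw [codisjoint_iff, eq_top_iff]
    intro x _
    have hx : ∀ i, ∃ d ∈ D i, ∃ d' ∈ D' i, d + d' = x i := by
      intro i
      have : x i ∈ D i ⊔ D' i := by
        rw [codisjoint_iff.mp (hcompl i).codisjoint]; trivial
      exact Submodule.mem_sup.mp this
    choose d hd d' hd' hsum using hx
    exact Submodule.mem_sup.mpr ⟨d, fun i _ => hd i, d', fun i _ => hd' i, funext hsum⟩
  · -- N ≤ pi D
    exact le_trans hNpi (Submodule.pi_mono fun i _ => (hess i).1)
  · -- essentiality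
    intro K hK hKne
    obtain ⟨x, hxK, hx0⟩ := Submodule.exists_mem_ne_zero_of_ne_bot hKne
    have hxD : x ∈ Submodule.pi Set.univ D := hK hxK
    -- find r with r • x ∈ pi Ni and r • x ≠ 0
    have main : ∀ s : Finset ι, ∃ r : A, r • x ≠ 0 ∧ ∀ i ∈ s, (r • x) i ∈ Ni i := by
      intro s
      induction s using Finset.induction_on with
      | empty => exact ⟨1, by simpa using hx0, fun i hi => absurd hi (by simp)⟩
      | insert j s hni ih =>
        obtain ⟨r, hr0, hrmem⟩ := ih
        by_cases hj : (r • x) j = 0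
        · refine ⟨r, hr0, fun i hi => ?_⟩
          rcases Finset.mem_insert.mp hi with rfl | hi
          · rw [hj]; exact (Ni i).zero_mem
          · exact hrmem i hi
        · have hrxD : r • x ∈ Submodule.pi Set.univ D := Submodule.smul_mem _ r hxD
          obtain ⟨r', hr'mem, hr'0⟩ := hess' j ((r • x) j) (hrxD j trivial) hj
          refine ⟨r' * r, ?_, fun i hi => ?_⟩
          · intro hc
            apply hr'0
            have : ((r' * r) • x) j = 0 := by rw [hc]; rfl
            rw [mul_smul] at this
            simpa using this
          · rcases Finset.mem_insert.mp hi with rfl | hi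
            · rw [mul_smul]; simpa using hr'mem
            · rw [mul_smul]
              have : (r' • (r • x)) i = r' • ((r • x) i) := rfl
              rw [this]
              exact (Ni i).smul_mem r' (hrmem i hi)
    obtain ⟨r, hr0, hrmem⟩ := main Finset.univ
    refine fun hbot => hr0 ?_
    have h1 : r • x ∈ N ⊓ K :=
      ⟨hpiN (fun i _ => hrmem i (Finset.mem_univ i)), K.smul_mem r hxK⟩
    rw [hbot] at h1
    simpa using h1

/-- A finite direct sum of FI-extending modules is FI-extending; in particular,
if `R` is right FI-extending then so is every finite free right module `R^t`. -/
theorem fiExtending_finite_directSum (R : Type*) [Ring R]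
    {ι : Type*} [Fintype ι] (M : ι → Type*) [∀ i, AddCommGroup (M i)]
    [∀ i, Module Rᵐᵒᵖ (M i)] (h : ∀ i, IsFIExtending Rᵐᵒᵖ (M i)) :
    IsFIExtending Rᵐᵒᵖ (∀ i, M i) ∧
      (IsFIExtending Rᵐᵒᵖ R → ∀ t : ℕ, 0 < t → IsFIExtending Rᵐᵒᵖ (Fin t → R)) :=
  ⟨pi_fiExtending M h, fun hR t _ => pi_fiExtending (fun _ : Fin t => R) (fun _ => hR)⟩
end

section
/- Let E = [[e, m],[n, f]] be an idempotent endomorphism of M_1 ⊕ M_2 (in matrix form). If (m∘n)^k = 0 and (n∘m)^k = 0 for some positive integer k, then diag(e^k, f^k) · E · diag(e^k, f^k) = diag(e^{2k+1}, f^{2k+1}). -/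
section Helpers
variable {R M1 M2 : Type*} [Ring R] [AddCommGroup M1] [AddCommGroup M2]
    [Module R M1] [Module R M2]
    [Module R M1] [Module R M2]

lemma blockMap_comp (a : M1 →ₗ[R] M1) (b : M2 →ₗ[R] M1) (c : M1 →ₗ[R] M2) (d : M2 →ₗ[R] M2)
    (e : M1 →ₗ[R] M1) (m : M2 →ₗ[R] M1) (n : M1 →ₗ[R] M2) (f : M2 →ₗ[R] M2) :
    blockMap a b c d ∘ₗ blockMap e m n f =
      blockMap (a ∘ₗ e + b ∘ₗ n) (a ∘ₗ m + b ∘ₗ f) (c ∘ₗ e + d ∘ₗ n) (c ∘ₗ m + d ∘ₗ f) := by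
  apply LinearMap.ext; rintro ⟨x, y⟩
  simp [blockMap, Prod.ext_iff]
  constructor <;> abel

lemma blockMap_inj (e e' : M1 →ₗ[R] M1) (m m' : M2 →ₗ[R] M1) (n n' : M1 →ₗ[R] M2)
    (f f' : M2 →ₗ[R] M2) (h : blockMap e m n f = blockMap e' m' n' f') :
    e = e' ∧ m = m' ∧ n = n' ∧ f = f' := by
  refine ⟨?_, ?_, ?_, ?_⟩ <;> apply LinearMap.ext <;> intro x
  · have := congrArg (fun g => (g (x, 0)).1) h; simpa [blockMap] using this
  · have := congrArg (fun g => (g (0, x)).1) h; simpa [blockMap] using this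
  · have := congrArg (fun g => (g (x, 0)).2) h; simpa [blockMap] using this
  · have := congrArg (fun g => (g (0, x)).2) h; simpa [blockMap] using this



end Helpers

/-- For an idempotent block endomorphism with `(mn)^k = (nm)^k = 0`, the
diagonal conjugate `diag(e^k,f^k)·E·diag(e^k,f^k)` equals
`diag(e^(2k+1), f^(2k+1))`. -/
theorem diag_conjugate_eq (R M1 M2 : Type*) [Ring R] [AddCommGroup M1]
    [AddCommGroup M2] [Module Rᵐᵒᵖ M1] [Module Rᵐᵒᵖ M2]
    (e : M1 →ₗ[Rᵐᵒᵖ] M1) (m : M2 →ₗ[Rᵐᵒᵖ] M1)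
    (n : M1 →ₗ[Rᵐᵒᵖ] M2) (f : M2 →ₗ[Rᵐᵒᵖ] M2)
    (hE : blockMap e m n f ∘ₗ blockMap e m n f = blockMap e m n f)
    (k : ℕ) (hk : 0 < k) (hmn : (m ∘ₗ n) ^ k = 0) (hnm : (n ∘ₗ m) ^ k = 0) :
    blockMap (e ^ k) 0 0 (f ^ k) ∘ₗ blockMap e m n f ∘ₗ
        blockMap (e ^ k) 0 0 (f ^ k) =
      blockMap (e ^ (2 * k + 1)) 0 0 (f ^ (2 * k + 1)) := by
  
  rw [blockMap_comp] at hE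
  obtain ⟨h1, h2, h3, h4⟩ := blockMap_inj _ _ _ _ _ _ _ _ hE
  have hem : e ∘ₗ m = m ∘ₗ (1 - f) := by
    ext x; have := congrFun (congrArg DFunLike.coe h2) x
    simp only [LinearMap.add_apply, LinearMap.comp_apply, LinearMap.sub_apply,
      Module.End.one_apply, map_sub] at *
    exact eq_sub_of_add_eq this
  have hfn : f ∘ₗ n = n ∘ₗ (1 - e) := by
    ext x; have := congrFun (congrArg DFunLike.coe h3) x
    simp only [LinearMap.add_apply, LinearMap.comp_apply, LinearMap.sub_apply,
      Module.End.one_apply, map_sub] at *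
    exact eq_sub_of_add_eq' this
  have hemj : ∀ j : ℕ, (e ^ j) ∘ₗ m = m ∘ₗ ((1 - f) ^ j) := by
    intro j; induction j with
    | zero => ext x; simp
    | succ j ih =>
      rw [pow_succ, pow_succ, Module.End.mul_eq_comp, Module.End.mul_eq_comp,
        LinearMap.comp_assoc, hem, ← LinearMap.comp_assoc, ih, LinearMap.comp_assoc]
  have hfnj : ∀ j : ℕ, (f ^ j) ∘ₗ n = n ∘ₗ ((1 - e) ^ j) := by
    intro j; induction j with
    | zero => ext x; simp
    | succ j ih =>
      rw [pow_succ, pow_succ, Module.End.mul_eq_comp, Module.End.mul_eq_comp,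
        LinearMap.comp_assoc, hfn, ← LinearMap.comp_assoc, ih, LinearMap.comp_assoc]
  have hf2 : (1 - f) * f = n ∘ₗ m := by
    have h : f - f * f = n ∘ₗ m := by
      rw [Module.End.mul_eq_comp]; exact (eq_sub_of_add_eq h4).symm
    rw [sub_mul, one_mul, h]
  have he2 : (1 - e) * e = m ∘ₗ n := by
    have h : e - e * e = m ∘ₗ n := by
      rw [Module.End.mul_eq_comp]; exact (eq_sub_of_add_eq' h1).symm
    rw [sub_mul, one_mul, h]
  have hcf : Commute (1 - f) f := ((Commute.one_left f).sub_left (Commute.refl f))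
  have hce : Commute (1 - e) e := ((Commute.one_left e).sub_left (Commute.refl e))
  have key1 : (e ^ k) ∘ₗ (m ∘ₗ (f ^ k)) = 0 := by
    rw [← LinearMap.comp_assoc, hemj, LinearMap.comp_assoc,
      ← Module.End.mul_eq_comp ((1-f)^k), ← hcf.mul_pow, hf2, hnm, LinearMap.comp_zero]
  have key2 : (f ^ k) ∘ₗ (n ∘ₗ (e ^ k)) = 0 := by
    rw [← LinearMap.comp_assoc, hfnj, LinearMap.comp_assoc,
      ← Module.End.mul_eq_comp ((1-e)^k), ← hce.mul_pow, he2, hmn, LinearMap.comp_zero]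
  have key3 : (e ^ k) ∘ₗ (e ∘ₗ (e ^ k)) = e ^ (2 * k + 1) := by
    rw [← Module.End.mul_eq_comp, ← Module.End.mul_eq_comp, ← pow_succ', ← pow_add]
    congr 1; omega
  have key4 : (f ^ k) ∘ₗ (f ∘ₗ (f ^ k)) = f ^ (2 * k + 1) := by
    rw [← Module.End.mul_eq_comp, ← Module.End.mul_eq_comp, ← pow_succ', ← pow_add]
    congr 1; omega
  rw [blockMap_comp, blockMap_comp]
  simp only [LinearMap.comp_zero, LinearMap.zero_comp, add_zero, zero_add,
    LinearMap.comp_assoc, key1, key2, key3, key4]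
end

section
/- Let E = [[e, m],[n, f]] be an idempotent endomorphism of M = M_1 ⊕ M_2 and suppose (m∘n)^k = (n∘m)^k = 0. If N is a fully invariant submodule of M with N essential in E(M), then diag(e^k, f^k)∘E∘diag(e^k, f^k) acts as the identity on N; that is, for every x ∈ N, diag(e^k,f^k)(E(diag(e^k,f^k)(x))) = x. -/
open Polynomial

section DiagAux
variable {R M1 M2 : Type*} [Ring R] [AddCommGroup M1] [AddCommGroup M2]
  [Module R M1] [Module R M2]

private lemma diag_pow_fix (e : M1 →ₗ[R] M1) (v : M1) (h : e v = v) (k : ℕ) :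
    (e ^ k) v = v := by
  induction k with
  | zero => simp
  | succ j ih => rw [pow_succ, Module.End.mul_apply, h, ih]

private lemma diag_cross (e : M1 →ₗ[R] M1) (m : M2 →ₗ[R] M1) (f : M2 →ₗ[R] M2)
    (hm : ∀ w, e (m w) + m (f w) = m w) (p : ℤ[X]) :
    m ∘ₗ (aeval f p : M2 →ₗ[R] M2) = (aeval (1 - e) p : M1 →ₗ[R] M1) ∘ₗ m := by
  have hmf : m ∘ₗ f = (1 - e) ∘ₗ m := by
    ext w
    simp only [LinearMap.comp_apply, LinearMap.sub_apply, Module.End.one_apply]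
    exact eq_sub_of_add_eq' (hm w)
  induction p using Polynomial.induction_on with
  | C z =>
      ext w
      simp [Polynomial.aeval_C, algebraMap_int_eq, eq_intCast,
        Module.End.intCast_apply, map_zsmul]
  | add p q hp hq =>
      simp only [map_add, LinearMap.add_comp, LinearMap.comp_add, hp, hq]
  | monomial j z ih =>
      have h1 : (C z * X ^ (j + 1) : ℤ[X]) = C z * X ^ j * X := by ring
      have e1 : (aeval f (C z * X ^ j * X) : M2 →ₗ[R] M2)
          = aeval f (C z * X ^ j) * f := by rw [map_mul, aeval_X]
      have e2 : (aeval (1 - e) (C z * X ^ j * X) : M1 →ₗ[R] M1)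
          = aeval (1 - e) (C z * X ^ j) * (1 - e) := by rw [map_mul, aeval_X]
      rw [h1, e1, e2, Module.End.mul_eq_comp, Module.End.mul_eq_comp,
        ← LinearMap.comp_assoc, ih, LinearMap.comp_assoc, hmf,
        ← LinearMap.comp_assoc]

private lemma diag_core (e : M1 →ₗ[R] M1) (m : M2 →ₗ[R] M1) (f : M2 →ₗ[R] M2) (k : ℕ)
    (hm : ∀ w, e (m w) + m (f w) = m w)
    (hqe : (aeval e ((X * (1 - X)) ^ k : ℤ[X]) : M1 →ₗ[R] M1) = 0)
    (g w : ℤ[X]) (hg : g.comp (1 - X) * (1 - X) * g = w * (X * (1 - X)) ^ k)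
    (z1 : M1) (z2 : M2) (h1 : aeval e g z1 = z1) (h2 : aeval f g z2 = z2)
    (hz : e z1 + m z2 = z1) : m z2 = 0 := by
  have hmz : m z2 = z1 - e z1 := eq_sub_of_add_eq' hz
  have hcomp : (aeval (1 - e) g : M1 →ₗ[R] M1) = aeval e (g.comp (1 - X)) := by
    rw [aeval_comp]; simp
  have step : m z2 = aeval e (g.comp (1 - X) * (1 - X) * g) z1 := by
    conv_lhs => rw [← h2]
    calc m (aeval f g z2) = (m ∘ₗ (aeval f g : M2 →ₗ[R] M2)) z2 := rfl
      _ = ((aeval (1 - e) g : M1 →ₗ[R] M1) ∘ₗ m) z2 := by rw [diag_cross e m f hm g]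
      _ = aeval (1 - e) g (m z2) := rfl
      _ = aeval e (g.comp (1 - X)) (aeval e ((1 : ℤ[X]) - X) z1) := by
          rw [hcomp, hmz]
          congr 1
          simp [LinearMap.sub_apply]
      _ = aeval e (g.comp (1 - X) * ((1 : ℤ[X]) - X)) z1 := by
          rw [map_mul (aeval e) (g.comp (1 - X)) ((1 : ℤ[X]) - X), Module.End.mul_apply]
      _ = aeval e (g.comp (1 - X) * ((1 : ℤ[X]) - X)) (aeval e g z1) := by rw [h1]
      _ = aeval e (g.comp (1 - X) * ((1 : ℤ[X]) - X) * g) z1 := by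
          rw [map_mul (aeval e) (g.comp (1 - X) * ((1 : ℤ[X]) - X)) g,
            Module.End.mul_apply]
  rw [step, hg, map_mul (aeval e) w ((X * (1 - X)) ^ k), Module.End.mul_apply, hqe,
    LinearMap.zero_apply, map_zero]

private lemma diag_core2 (e : M1 →ₗ[R] M1) (m : M2 →ₗ[R] M1) (f : M2 →ₗ[R] M2) (k : ℕ)
    (hm : ∀ w, e (m w) + m (f w) = m w)
    (hqe : (aeval e ((X * (1 - X)) ^ k : ℤ[X]) : M1 →ₗ[R] M1) = 0)
    (g w w' : ℤ[X]) (hg : g.comp (1 - X) * (1 - X) * g = w * (X * (1 - X)) ^ k)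
    (hg2 : (X : ℤ[X]) ^ k * g = w' * (X * (1 - X)) ^ k)
    (z1 : M1) (z2 : M2) (h1 : aeval e g z1 = z1) (h2 : aeval f g z2 = z2)
    (hz : e z1 + m z2 = z1) : z1 = 0 := by
  have hm0 : m z2 = 0 := diag_core e m f k hm hqe g w hg z1 z2 h1 h2 hz
  have he1 : e z1 = z1 := by rw [hm0, add_zero] at hz; exact hz
  have hek : (e ^ k) z1 = z1 := diag_pow_fix e z1 he1 k
  have hz1 : z1 = aeval e ((X : ℤ[X]) ^ k * g) z1 := by
    rw [map_mul (aeval e) ((X : ℤ[X]) ^ k) g, Module.End.mul_apply, h1, map_pow,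
      aeval_X, hek]
  rw [hz1, hg2, map_mul (aeval e) w' ((X * (1 - X)) ^ k), Module.End.mul_apply, hqe,
    LinearMap.zero_apply, map_zero]

private lemma diag_idem (e : M1 →ₗ[R] M1) (k : ℕ) (P Q : ℤ[X])
    (hPQ : P * X ^ k + Q * (1 - X) ^ k = 1)
    (hqe : (aeval e ((X * (1 - X)) ^ k : ℤ[X]) : M1 →ₗ[R] M1) = 0) :
    (aeval e (P * X ^ k) : M1 →ₗ[R] M1) * aeval e (P * X ^ k) = aeval e (P * X ^ k) ∧
    (aeval e (Q * (1 - X) ^ k) : M1 →ₗ[R] M1) * aeval e (Q * (1 - X) ^ k)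
      = aeval e (Q * (1 - X) ^ k) := by
  have hpoly : (P * X ^ k * (Q * (1 - X) ^ k) : ℤ[X]) = P * Q * (X * (1 - X)) ^ k := by
    rw [mul_pow]; ring
  have hcross : (aeval e (P * X ^ k) : M1 →ₗ[R] M1) * aeval e (Q * (1 - X) ^ k) = 0 := by
    rw [← map_mul, hpoly, map_mul (aeval e) (P * Q) ((X * (1 - X)) ^ k), hqe, mul_zero]
  have hcross' : (aeval e (Q * (1 - X) ^ k) : M1 →ₗ[R] M1) * aeval e (P * X ^ k) = 0 := by
    rw [← map_mul, mul_comm, hpoly, map_mul (aeval e) (P * Q) ((X * (1 - X)) ^ k), hqe,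
      mul_zero]
  have hsum : (aeval e (P * X ^ k) : M1 →ₗ[R] M1) + aeval e (Q * (1 - X) ^ k) = 1 := by
    rw [← map_add, hPQ, map_one]
  constructor
  · have h1 := congrArg (fun t => (aeval e (P * X ^ k) : M1 →ₗ[R] M1) * t) hsum
    simp only [mul_add, mul_one] at h1
    rw [hcross, add_zero] at h1
    exact h1
  · have h1 := congrArg (fun t => (aeval e (Q * (1 - X) ^ k) : M1 →ₗ[R] M1) * t) hsum
    simp only [mul_add, mul_one] at h1
    rw [hcross', zero_add] at h1
    exact h1

private lemma blockMap_apply' (e : M1 →ₗ[R] M1) (m : M2 →ₗ[R] M1)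
    (n : M1 →ₗ[R] M2) (f : M2 →ₗ[R] M2) (v : M1 × M2) :
    blockMap e m n f v = (e v.1 + m v.2, n v.1 + f v.2) := rfl

end DiagAux

/-- With `N` fully invariant and essential in `E(M)`, the map
`diag(e^k,f^k)∘E∘diag(e^k,f^k)` acts as the identity on `N`. -/
theorem diag_conjugate_fixes (R M1 M2 : Type*) [Ring R] [AddCommGroup M1]
    [AddCommGroup M2] [Module Rᵐᵒᵖ M1] [Module Rᵐᵒᵖ M2]
    (e : M1 →ₗ[Rᵐᵒᵖ] M1) (m : M2 →ₗ[Rᵐᵒᵖ] M1)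
    (n : M1 →ₗ[Rᵐᵒᵖ] M2) (f : M2 →ₗ[Rᵐᵒᵖ] M2)
    (hE : blockMap e m n f ∘ₗ blockMap e m n f = blockMap e m n f)
    (k : ℕ) (hk : 0 < k) (hmn : (m ∘ₗ n) ^ k = 0) (hnm : (n ∘ₗ m) ^ k = 0)
    (N : Submodule Rᵐᵒᵖ (M1 × M2)) (hN : N.FullyInvariant)
    (hess : N.EssentialIn (LinearMap.range (blockMap e m n f))) :
    ∀ x ∈ N, (blockMap (e ^ k) 0 0 (f ^ k) ∘ₗ blockMap e m n f ∘ₗ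
      blockMap (e ^ k) 0 0 (f ^ k)) x = x := by
  intro x hx
  -- pointwise idempotency
  have hBB : ∀ v, blockMap e m n f (blockMap e m n f v) = blockMap e m n f v := by
    intro v
    have := LinearMap.ext_iff.mp hE v
    rwa [LinearMap.comp_apply] at this
  -- E fixes every element of N
  have hfix : ∀ y ∈ N, blockMap e m n f y = y := by
    intro y hy
    obtain ⟨w, hw⟩ := hess.1 hy
    rw [← hw, hBB]
  -- componentwise equations of idempotency
  have hePt : ∀ v, e (e v) + m (n v) = e v := by
    intro v
    have h := hBB (v, 0)
    rw [blockMap_apply', blockMap_apply'] at h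
    have h1 := congrArg Prod.fst h
    simpa using h1
  have hnPt : ∀ v, n (e v) + f (n v) = n v := by
    intro v
    have h := hBB (v, 0)
    rw [blockMap_apply', blockMap_apply'] at h
    have h1 := congrArg Prod.snd h
    simpa using h1
  have hmPt : ∀ w, e (m w) + m (f w) = m w := by
    intro w
    have h := hBB (0, w)
    rw [blockMap_apply', blockMap_apply'] at h
    have h1 := congrArg Prod.fst h
    simpa using h1
  have hfPt : ∀ w, n (m w) + f (f w) = f w := by
    intro w
    have h := hBB (0, w)
    rw [blockMap_apply', blockMap_apply'] at h
    have h1 := congrArg Prod.snd h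
    simpa using h1
  have hnPt' : ∀ v, f (n v) + n (e v) = n v := fun v => by
    rw [add_comm]; exact hnPt v
  -- the nilpotency facts, packaged through aeval
  have hqe : (aeval e ((X * (1 - X)) ^ k : ℤ[X]) : M1 →ₗ[Rᵐᵒᵖ] M1) = 0 := by
    have h1 : (aeval e (X * (1 - X) : ℤ[X]) : M1 →ₗ[Rᵐᵒᵖ] M1) = m ∘ₗ n := by
      rw [map_mul (aeval e) (X : ℤ[X]) (1 - X), aeval_X, map_sub, map_one, aeval_X,
        mul_sub, mul_one]
      ext v
      simp only [LinearMap.sub_apply, Module.End.mul_apply, LinearMap.comp_apply]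
      exact (eq_sub_of_add_eq' (hePt v)).symm
    rw [map_pow, h1, hmn]
  have hqf : (aeval f ((X * (1 - X)) ^ k : ℤ[X]) : M2 →ₗ[Rᵐᵒᵖ] M2) = 0 := by
    have h1 : (aeval f (X * (1 - X) : ℤ[X]) : M2 →ₗ[Rᵐᵒᵖ] M2) = n ∘ₗ m := by
      rw [map_mul (aeval f) (X : ℤ[X]) (1 - X), aeval_X, map_sub, map_one, aeval_X,
        mul_sub, mul_one]
      ext w
      simp only [LinearMap.sub_apply, Module.End.mul_apply, LinearMap.comp_apply]
      exact (eq_sub_of_add_eq (hfPt w)).symm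
    rw [map_pow, h1, hnm]
  -- coprimality of X^k and (1-X)^k
  obtain ⟨P, Q, hPQ⟩ : ∃ P Q : ℤ[X], P * X ^ k + Q * (1 - X) ^ k = 1 := by
    have h : IsCoprime (X : ℤ[X]) (1 - X) := ⟨1, 1, by ring⟩
    obtain ⟨P, Q, h⟩ := h.pow (m := k) (n := k)
    exact ⟨P, Q, h⟩
  -- polynomial side conditions for diag_core / diag_core2
  have hgQ : ((Q * (1 - X) ^ k : ℤ[X]).comp (1 - X)) * (1 - X) * (Q * (1 - X) ^ k)
      = (Q.comp (1 - X) * Q * (1 - X)) * (X * (1 - X)) ^ k := by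
    simp only [mul_comp, pow_comp, sub_comp, one_comp, X_comp, mul_pow]
    ring
  have hg2Q : (X : ℤ[X]) ^ k * (Q * (1 - X) ^ k) = Q * (X * (1 - X)) ^ k := by
    rw [mul_pow]; ring
  have hgP : ((P * X ^ k : ℤ[X]).comp (1 - X)) * (1 - X) * (P * X ^ k)
      = (P.comp (1 - X) * P * (1 - X)) * (X * (1 - X)) ^ k := by
    simp only [mul_comp, pow_comp, sub_comp, one_comp, X_comp, mul_pow]
    ring
  -- idempotents
  obtain ⟨hPe, hQe⟩ := diag_idem e k P Q hPQ hqe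
  obtain ⟨hPf, hQf⟩ := diag_idem f k P Q hPQ hqf
  -- z := P' x  lies in N and is fixed by E
  set g : ℤ[X] := Q * (1 - X) ^ k with hgdef
  set gP : ℤ[X] := P * X ^ k with hgPdef
  have hzN : blockMap (aeval e g) 0 0 (aeval f g) x ∈ N :=
    hN _ (Submodule.mem_map_of_mem hx)
  have hzfix := hfix _ hzN
  have hz1 : e (aeval e g x.1) + m (aeval f g x.2) = aeval e g x.1 := by
    have := congrArg Prod.fst hzfix
    simpa [blockMap_apply'] using this
  have hz2 : f (aeval f g x.2) + n (aeval e g x.1) = aeval f g x.2 := by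
    have := congrArg Prod.snd hzfix
    rw [add_comm]
    simpa [blockMap_apply'] using this
  -- idempotence gives fixed-point hypotheses
  have hfix1 : aeval e g (aeval e g x.1) = aeval e g x.1 := by
    rw [← Module.End.mul_apply, hQe]
  have hfix2 : aeval f g (aeval f g x.2) = aeval f g x.2 := by
    rw [← Module.End.mul_apply, hQf]
  -- kill the "bad" components
  have hQ1 : aeval e g x.1 = 0 :=
    diag_core2 e m f k hmPt hqe g (Q.comp (1 - X) * Q * (1 - X)) Q hgQ hg2Q
      (aeval e g x.1) (aeval f g x.2) hfix1 hfix2 hz1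
  have hQ2 : aeval f g x.2 = 0 :=
    diag_core2 f n e k hnPt' hqf g (Q.comp (1 - X) * Q * (1 - X)) Q hgQ hg2Q
      (aeval f g x.2) (aeval e g x.1) hfix2 hfix1 hz2
  -- hence x is fixed by the "good" idempotent
  have hsum_e : (aeval e gP : M1 →ₗ[Rᵐᵒᵖ] M1) + aeval e g = 1 := by
    rw [← map_add, hPQ, map_one]
  have hsum_f : (aeval f gP : M2 →ₗ[Rᵐᵒᵖ] M2) + aeval f g = 1 := by
    rw [← map_add, hPQ, map_one]
  have hx1P : aeval e gP x.1 = x.1 := by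
    have := LinearMap.ext_iff.mp hsum_e x.1
    rw [LinearMap.add_apply, hQ1, add_zero, Module.End.one_apply] at this
    exact this
  have hx2P : aeval f gP x.2 = x.2 := by
    have := LinearMap.ext_iff.mp hsum_f x.2
    rw [LinearMap.add_apply, hQ2, add_zero, Module.End.one_apply] at this
    exact this
  -- x itself is fixed by E
  have hxfix := hfix x hx
  rw [blockMap_apply'] at hxfix
  have hx1 : e x.1 + m x.2 = x.1 := congrArg Prod.fst hxfix
  have hx2 : f x.2 + n x.1 = x.2 := by
    have := congrArg Prod.snd hxfix
    rw [add_comm]; exact this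
  -- conclude m x.2 = 0, n x.1 = 0
  have hm0 : m x.2 = 0 :=
    diag_core e m f k hmPt hqe gP (P.comp (1 - X) * P * (1 - X)) hgP
      x.1 x.2 hx1P hx2P hx1
  have hn0 : n x.1 = 0 :=
    diag_core f n e k hnPt' hqf gP (P.comp (1 - X) * P * (1 - X)) hgP
      x.2 x.1 hx2P hx1P hx2
  have he1 : e x.1 = x.1 := by rw [hm0, add_zero] at hx1; exact hx1
  have hf1 : f x.2 = x.2 := by rw [hn0, add_zero] at hx2; exact hx2
  have hek : (e ^ k) x.1 = x.1 := diag_pow_fix e x.1 he1 k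
  have hfk : (f ^ k) x.2 = x.2 := diag_pow_fix f x.2 hf1 k
  -- final computation
  simp only [LinearMap.comp_apply, blockMap_apply', LinearMap.zero_apply,
    add_zero, zero_add, hek, hfk, hm0, hn0, he1, hf1]
end

section
/- Let S = End_R(P ⊕ Q) and suppose S = h·S ⊕ (1-E)·S for an idempotent-like decomposition where h = diag(e^{2k+1}, f^{2k+1}) and E = [[e,m],[n,f]] is idempotent. Then applying the decomposition to the submodule P ⊕ 0 yields that e^{2k+1}(P) is a direct summand of P. -/
open Finset in
lemma exists_idem_of_nilpotent_obstruction {S : Type*} [Ring S] (x : S) (k : ℕ)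
    (hnil : x ^ k * (1 - x) ^ k = 0) :
    ∃ A : S, A * A = A ∧ A * x ^ (2 * k + 1) = x ^ (2 * k + 1) ∧
      ∃ D : S, A = x ^ (2 * k + 1) * D := by
  set y := 1 - x with hy
  have c : Commute x y := (Commute.one_right x).sub_right (Commute.refl x)
  set t : ℕ → S := fun i => ((2 * k).choose i) • (x ^ i * y ^ (2 * k - i)) with ht
  have hone : (1 : S) = ∑ i ∈ range (2 * k + 1), t i := by
    have h2 := c.add_pow (2 * k)
    rw [show x + y = 1 by rw [hy]; abel, one_pow] at h2
    rw [h2]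
    refine Finset.sum_congr rfl fun i _ => ?_
    rw [ht]
    simp only [nsmul_eq_mul]
    rw [(Nat.cast_commute ((2 * k).choose i) (x ^ i * y ^ (2 * k - i))).eq, mul_assoc]
  set A : S := ∑ i ∈ Ico (k + 1) (2 * k + 1), t i with hA
  set B : S := ∑ i ∈ range (k + 1), t i with hB
  have hBA : B + A = 1 := by
    rw [hone, hB, hA]
    simp only [range_eq_Ico]
    exact sum_Ico_consecutive t (m := 0) (n := k + 1) (k := 2 * k + 1) (Nat.zero_le _) (by omega)
  have hxy : ∀ a b : ℕ, k ≤ a → k ≤ b → x ^ a * y ^ b = 0 := by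
    intro a b ha hb
    rw [show a = (a - k) + k by omega, show b = k + (b - k) by omega,
      pow_add, pow_add, mul_assoc, ← mul_assoc (x ^ k), hnil, zero_mul, mul_zero]
  have hprod : ∀ a b a' b' : ℕ, k ≤ a + a' → k ≤ b + b' →
      (x ^ a * y ^ b) * (x ^ a' * y ^ b') = 0 := by
    intro a b a' b' ha hb
    have : (x ^ a * y ^ b) * (x ^ a' * y ^ b') = x ^ a * (x ^ a' * y ^ b) * y ^ b' := by
      rw [← (c.symm.pow_pow b a').eq]
      simp [mul_assoc]
    rw [this, ← hxy (a + a') (b + b') ha hb, pow_add, pow_add]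
    simp [mul_assoc]
  have hterm : ∀ i j : ℕ, k + 1 ≤ i → j ≤ k → t i * t j = 0 := by
    intro i j hi hj
    rw [ht]
    simp only
    rw [smul_mul_assoc, mul_smul_comm,
      hprod i (2 * k - i) j (2 * k - j) (by omega) (by omega), smul_zero, smul_zero]
  have hAB : A * B = 0 := by
    rw [hA, hB, sum_mul_sum]
    refine Finset.sum_eq_zero fun i hi => Finset.sum_eq_zero fun j hj => ?_
    simp only [mem_Ico, mem_range] at hi hj
    exact hterm i j (by omega) (by omega)
  have hAA : A * A = A := by
    have h3 := congrArg (A * ·) hBA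
    simp only [mul_add, mul_one] at h3
    rw [hAB, zero_add] at h3
    exact h3
  have hBx : B * x ^ (2 * k + 1) = 0 := by
    rw [hB, sum_mul]
    refine Finset.sum_eq_zero fun j hj => ?_
    simp only [mem_range] at hj
    rw [ht]
    simp only
    rw [smul_mul_assoc, mul_assoc, (c.symm.pow_pow (2 * k - j) (2 * k + 1)).eq,
      ← mul_assoc, ← pow_add, hxy (j + (2 * k + 1)) (2 * k - j) (by omega) (by omega),
      smul_zero]
  have hAx : A * x ^ (2 * k + 1) = x ^ (2 * k + 1) := by
    have h4 := congrArg (· * x ^ (2 * k + 1)) hBA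
    simp only [add_mul, one_mul] at h4
    rw [hBx, zero_add] at h4
    exact h4
  set D1 : S := ∑ i ∈ Ico (k + 1) (2 * k + 1),
      ((2 * k).choose i) • (x ^ (i - (k + 1)) * y ^ (2 * k - i)) with hD1
  have hA1 : A = x ^ (k + 1) * D1 := by
    rw [hA, hD1, Finset.mul_sum]
    refine Finset.sum_congr rfl fun i hi => ?_
    simp only [mem_Ico] at hi
    rw [ht]
    simp only
    rw [mul_smul_comm, ← mul_assoc, ← pow_add]
    congr 3
    omega
  have hcomm : Commute (x ^ (k + 1)) D1 := by
    rw [hD1]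
    refine Commute.sum_right _ _ _ fun i _ => ?_
    exact Commute.smul_right
      (((Commute.refl x).pow_pow _ _).mul_right ((c.pow_right _).pow_left _)) _
  refine ⟨A, hAA, hAx, x * (D1 * D1), ?_⟩
  calc A = A * A := hAA.symm
    _ = x ^ (k + 1) * (D1 * x ^ (k + 1)) * D1 := by rw [hA1]; simp [mul_assoc]
    _ = x ^ (k + 1) * (x ^ (k + 1) * D1) * D1 := by rw [← hcomm.eq]
    _ = x ^ (2 * k + 1) * (x * (D1 * D1)) := by
        rw [← mul_assoc (x ^ (k + 1)), ← pow_add,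
          show k + 1 + (k + 1) = 2 * k + 1 + 1 by omega, pow_succ]
        simp [mul_assoc]

/-- From the decomposition `S = hS ⊕ (1-E)S`, the submodule `e^(2k+1)(P)` is a
direct summand of `P`. -/
theorem range_pow_isDirectSummand (R P Q : Type*) [Ring R] [AddCommGroup P]
    [AddCommGroup Q] [Module Rᵐᵒᵖ P] [Module Rᵐᵒᵖ Q]
    (e : P →ₗ[Rᵐᵒᵖ] P) (m : Q →ₗ[Rᵐᵒᵖ] P)
    (n : P →ₗ[Rᵐᵒᵖ] Q) (f : Q →ₗ[Rᵐᵒᵖ] Q)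
    (E : Module.End Rᵐᵒᵖ (P × Q)) (hEdef : E = blockMap e m n f)
    (hE : E * E = E)
    (k : ℕ) (hk : 0 < k) (hmn : (m ∘ₗ n) ^ k = 0) (hnm : (n ∘ₗ m) ^ k = 0)
    (h : Module.End Rᵐᵒᵖ (P × Q))
    (hdef : h = blockMap (e ^ (2 * k + 1)) 0 0 (f ^ (2 * k + 1)))
    (hdecomp : ∀ s : Module.End Rᵐᵒᵖ (P × Q), ∃ a b, s = h * a + (1 - E) * b)
    (hdisj : ∀ a b : Module.End Rᵐᵒᵖ (P × Q), h * a = (1 - E) * b → h * a = 0) :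
    ∃ C : Submodule Rᵐᵒᵖ P, IsCompl (LinearMap.range (e ^ (2 * k + 1))) C := by
  rw [hEdef] at hE
  have key : ∀ p : P, e (e p) + m (n p) = e p := by
    intro p
    have h0 := DFunLike.congr_fun hE (p, (0 : Q))
    rw [Prod.ext_iff] at h0
    simpa [blockMap, Module.End.mul_apply] using h0.1
  have h5 : e * (1 - e) = (m ∘ₗ n : Module.End Rᵐᵒᵖ P) := by
    ext p
    simp only [Module.End.mul_apply, LinearMap.sub_apply, Module.End.one_apply,
      map_sub, LinearMap.coe_comp, Function.comp_apply]
    rw [sub_eq_iff_eq_add']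
    exact (key p).symm
  have hc : Commute e (1 - e) := (Commute.one_right e).sub_right (Commute.refl e)
  have hnil : e ^ k * (1 - e) ^ k = 0 := by
    rw [← hc.mul_pow, h5, hmn]
  obtain ⟨A, hAA, hAx, D, hAD⟩ := exists_idem_of_nilpotent_obstruction e k hnil
  have hr : LinearMap.range (e ^ (2 * k + 1)) = LinearMap.range A := by
    apply le_antisymm
    · rintro _ ⟨p, rfl⟩
      exact ⟨(e ^ (2 * k + 1)) p, by rw [← Module.End.mul_apply, hAx]⟩
    · rintro _ ⟨p, rfl⟩
      exact ⟨D p, by rw [← Module.End.mul_apply, ← hAD]⟩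
  refine ⟨LinearMap.ker A, ?_⟩
  rw [hr]
  constructor
  · rw [disjoint_iff]
    rw [Submodule.eq_bot_iff]
    rintro z ⟨⟨p, rfl⟩, hz2⟩
    have : A (A p) = A (A p) := rfl
    have hz2' : A (A p) = 0 := hz2
    calc A p = (A * A) p := by rw [hAA]
      _ = A (A p) := rfl
      _ = 0 := hz2'
  · rw [codisjoint_iff, eq_top_iff]
    rintro p -
    refine Submodule.mem_sup.2 ⟨A p, ⟨p, rfl⟩, p - A p, ?_, by abel⟩
    have : A (A p) = A p := by rw [← Module.End.mul_apply, hAA]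
    simp [LinearMap.mem_ker, map_sub, this]
end
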